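/- arXiv:1403.6351 — 4 statements merged into one kernel-verified Lean document; each statement's English description precedes it below -/
import Mathlib

section
/- Let V be a finite index set, W₀ an n×n symmetric positive definite matrix, and for each v ∈ V let W_v be symmetric positive semidefinite. Define W_S = W₀ + Σ_{s∈S} W_s and f(S) = log det(W_S). Then f is submodular: for all A ⊆ B ⊆ V and a ∈ V \ B, f(A ∪ {a}) − f(A) ≥ f(B ∪ {a}) − f(B). -/
/-!
Write `Q = Bᴴ * B`. By the matrix determinant lemma, for `N ≻ 0` the marginal gain
`log det (N + Q) - log det N` equals `log det (1 + B * N⁻¹ * Bᴴ)`. Inversion is antitone in the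
Loewner order (by the Woodbury identity) and `det` is monotone on positive definite matrices, so
this gain can only shrink as `N` grows from `W_A` to `W_B`.
-/

namespace Matrix

open scoped ComplexOrder MatrixOrder

variable {m : Type*} [Fintype m] [DecidableEq m]

lemma PosSemidef.exists_eq_conjTranspose_mul_self {𝕜 : Type*} [RCLike 𝕜] {Q : Matrix m m 𝕜}
    (hQ : Q.PosSemidef) : ∃ B : Matrix m m 𝕜, Q = Bᴴ * B :=
  CStarAlgebra.nonneg_iff_eq_star_mul_self.mp hQ.nonneg

lemma PosSemidef.one_le_det_one_add {E : Matrix m m ℝ} (hE : E.PosSemidef) :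
    1 ≤ (1 + E).det := by
  have h : 1 + E = cfc (fun x : ℝ => 1 + x) E := by
    rw [cfc_add .., cfc_const_one .., cfc_id' ..]
  rw [h, hE.isHermitian.cfc_eq]
  simp only [IsHermitian.cfc, det_map, det_diagonal]
  exact Finset.one_le_prod fun i _ => by simpa using hE.eigenvalues_nonneg i

lemma PosDef.det_add_conjTranspose_mul_self {A : Matrix m m ℝ} (hA : A.PosDef)
    (B : Matrix m m ℝ) : (A + Bᴴ * B).det = A.det * (1 + B * A⁻¹ * Bᴴ).det :=
  det_add_mul _ _ ((isUnit_iff_isUnit_det A).mp hA.isUnit)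

lemma PosDef.det_le_det_add {A D : Matrix m m ℝ} (hA : A.PosDef) (hD : D.PosSemidef) :
    A.det ≤ (A + D).det := by
  obtain ⟨B, rfl⟩ := hD.exists_eq_conjTranspose_mul_self
  rw [hA.det_add_conjTranspose_mul_self]
  exact le_mul_of_one_le_right hA.det_pos.le
    (hA.inv.posSemidef.mul_mul_conjTranspose_same B).one_le_det_one_add

lemma PosDef.posSemidef_inv_sub_inv_add {M P : Matrix m m ℝ} (hM : M.PosDef)
    (hP : P.PosSemidef) : (M⁻¹ - (M + P)⁻¹).PosSemidef := by
  obtain ⟨B, rfl⟩ := hP.exists_eq_conjTranspose_mul_self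
  have hK : (1 + B * M⁻¹ * Bᴴ).PosDef :=
    PosDef.one.add_posSemidef (hM.inv.posSemidef.mul_mul_conjTranspose_same B)
  have woodbury := add_mul_mul_inv_eq_sub M Bᴴ 1 B hM.isUnit isUnit_one (by simpa using hK.isUnit)
  rw [Matrix.mul_one, inv_one] at woodbury
  rw [woodbury, sub_sub_cancel]
  simpa only [conjTranspose_mul, hM.inv.isHermitian.eq, Matrix.mul_assoc] using
    hK.inv.posSemidef.conjTranspose_mul_mul_same (B * M⁻¹)

lemma PosDef.det_add_add_mul_det_le {M P Q : Matrix m m ℝ} (hM : M.PosDef) (hP : P.PosSemidef)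
    (hQ : Q.PosSemidef) : (M + P + Q).det * M.det ≤ (M + P).det * (M + Q).det := by
  obtain ⟨B, rfl⟩ := hQ.exists_eq_conjTranspose_mul_self
  have hMP := hM.add_posSemidef hP
  rw [hMP.det_add_conjTranspose_mul_self, hM.det_add_conjTranspose_mul_self]
  have hle : (1 + B * (M + P)⁻¹ * Bᴴ).det ≤ (1 + B * M⁻¹ * Bᴴ).det := by
    have h := (PosDef.one.add_posSemidef (hMP.inv.posSemidef.mul_mul_conjTranspose_same B))
      |>.det_le_det_add ((hM.posSemidef_inv_sub_inv_add hP).mul_mul_conjTranspose_same B)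
    convert h using 2
    noncomm_ring
  linear_combination mul_le_mul_of_nonneg_left hle (mul_pos hMP.det_pos hM.det_pos).le

lemma PosDef.log_det_add_add_sub_le {M P Q : Matrix m m ℝ} (hM : M.PosDef) (hP : P.PosSemidef)
    (hQ : Q.PosSemidef) :
    Real.log (M + P + Q).det - Real.log (M + P).det ≤ Real.log (M + Q).det - Real.log M.det := by
  have hMP := hM.add_posSemidef hP
  have h := Real.log_le_log (mul_pos (hMP.add_posSemidef hQ).det_pos hM.det_pos)
    (hM.det_add_add_mul_det_le hP hQ)
  rw [Real.log_mul (hMP.add_posSemidef hQ).det_pos.ne' hM.det_pos.ne',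
    Real.log_mul hMP.det_pos.ne' (hM.add_posSemidef hQ).det_pos.ne'] at h
  linarith

end Matrix

theorem log_det_gramian_submodular_general {V : Type*} [DecidableEq V] {n : ℕ}
    (W₀ : Matrix (Fin n) (Fin n) ℝ) (hW₀ : W₀.PosDef)
    (W : V → Matrix (Fin n) (Fin n) ℝ) (hW : ∀ v, (W v).PosSemidef)
    (f : Finset V → ℝ)
    (hf : ∀ S : Finset V, f S = Real.log (W₀ + ∑ s ∈ S, W s).det) :
    ∀ A B : Finset V, A ⊆ B → ∀ a ∉ B,
      f (insert a B) - f B ≤ f (insert a A) - f A := by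
  intro A B hAB a haB
  have hsum (S : Finset V) : (∑ s ∈ S, W s).PosSemidef := Matrix.posSemidef_sum S fun v _ => hW v
  have hB : W₀ + ∑ s ∈ B, W s = W₀ + ∑ s ∈ A, W s + ∑ s ∈ B \ A, W s := by
    rw [← Finset.sum_sdiff hAB]; abel
  have hinsertA : W₀ + ∑ s ∈ insert a A, W s = W₀ + ∑ s ∈ A, W s + W a := by
    rw [Finset.sum_insert (fun ha => haB (hAB ha))]; abel
  have hinsertB :
      W₀ + ∑ s ∈ insert a B, W s = W₀ + ∑ s ∈ A, W s + ∑ s ∈ B \ A, W s + W a := by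
    rw [Finset.sum_insert haB, ← hB]; abel
  rw [hf, hf, hf, hf, hinsertA, hinsertB, hB]
  exact (hW₀.add_posSemidef (hsum A)).log_det_add_add_sub_le (hsum _) (hW a)

/-- With `W₀ ≻ 0` and each `W v ⪰ 0`, the set function
`f S = log det (W₀ + ∑ s ∈ S, W s)` is submodular. -/
theorem log_det_gramian_submodular {V : Type*} [Fintype V] [DecidableEq V] {n : ℕ}
    (W₀ : Matrix (Fin n) (Fin n) ℝ) (hW₀ : W₀.PosDef)
    (W : V → Matrix (Fin n) (Fin n) ℝ) (hW : ∀ v, (W v).PosSemidef)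
    (f : Finset V → ℝ)
    (hf : ∀ S : Finset V, f S = Real.log (W₀ + ∑ s ∈ S, W s).det) :
    ∀ A B : Finset V, A ⊆ B → ∀ a ∉ B,
      f (insert a B) - f B ≤ f (insert a A) - f A :=
  log_det_gramian_submodular_general W₀ hW₀ W hW f hf
end

section
/- The minimum eigenvalue of the controllability Gramian is not submodular as a set function of actuator subsets: there exist a stable matrix A ∈ ℝ³ˣ³ and unit-vector input columns b₁, b₂, b₃ such that, with f(S) = λ_min(W_S) where W_S solves A W_S + W_S Aᵀ + B_S B_Sᵀ = 0, one has f({b₂, b₃}) − f({b₂}) < f({b₁, b₂, b₃}) − f({b₁, b₂}), violating the diminishing-returns inequality. -/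
open Matrix

/-- The smallest eigenvalue of the controllability Gramian is not submodular: there
exist a stable (Hurwitz) `A ∈ ℝ³ˣ³` and unit input columns `b₁, b₂, b₃`, with Gramians
`W S` solving the Lyapunov equation `A W + W Aᵀ + B_S B_Sᵀ = 0`, such that with
`f S = λ_min (W S)` the diminishing-returns inequality is violated:
`f {b₂,b₃} − f {b₂} < f {b₁,b₂,b₃} − f {b₁,b₂}`. -/
theorem lambda_min_gramian_not_submodular :
    ∃ (A : Matrix (Fin 3) (Fin 3) ℝ) (b : Fin 3 → Fin 3 → ℝ)
      (W : Finset (Fin 3) → Matrix (Fin 3) (Fin 3) ℝ),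
      (∀ z ∈ spectrum ℂ (A.map fun x : ℝ => (x : ℂ)), z.re < 0) ∧
      (∀ i, ∑ j, (b i j) ^ 2 = 1) ∧
      (∀ S : Finset (Fin 3),
        (W S).PosSemidef ∧
        A * W S + W S * Aᵀ + ∑ s ∈ S, Matrix.vecMulVec (b s) (b s) = 0) ∧
      (fun S : Finset (Fin 3) => sInf (spectrum ℝ (W S))) {1, 2} -
          (fun S : Finset (Fin 3) => sInf (spectrum ℝ (W S))) {1} <
        (fun S : Finset (Fin 3) => sInf (spectrum ℝ (W S))) {0, 1, 2} -
          (fun S : Finset (Fin 3) => sInf (spectrum ℝ (W S))) {0, 1} := by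
  refine ⟨Matrix.diagonal (fun _ => -1), fun i j => if i = j then 1 else 0,
    fun S => Matrix.diagonal (fun i => if i ∈ S then (1/2 : ℝ) else 0), ?_, ?_, ?_, ?_⟩
  · intro z hz
    rw [show ((Matrix.diagonal (fun _ => (-1:ℝ))).map fun x : ℝ => (x:ℂ)) =
        Matrix.diagonal (fun _ : Fin 3 => (-1:ℂ)) by
      simp [Matrix.diagonal_map]] at hz
    rw [_root_.spectrum_diagonal] at hz
    obtain ⟨i, rfl⟩ := hz
    norm_num
  · intro i
    fin_cases i <;> simp [Fin.sum_univ_three]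
  · intro S
    constructor
    · exact Matrix.posSemidef_diagonal_iff.mpr (fun i => by positivity)
    · have hsum : (∑ s ∈ S, Matrix.vecMulVec (fun j => if s = j then (1:ℝ) else 0)
          (fun j => if s = j then (1:ℝ) else 0)) =
          Matrix.diagonal (fun i => if i ∈ S then (1:ℝ) else 0) := by
        ext i j
        simp only [Matrix.sum_apply, Matrix.vecMulVec_apply, Matrix.diagonal_apply]
        by_cases hij : i = j
        · subst hij
          by_cases hi : i ∈ S
          · rw [Finset.sum_eq_single i (fun s _ hs => by simp [hs]) (by simp [hi])]
            simp [hi]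
          · rw [Finset.sum_eq_zero (fun s hs => by
              have : s ≠ i := fun h => hi (h ▸ hs)
              simp [this])]
            simp [hi]
        · rw [Finset.sum_eq_zero (fun s hs => by
            by_cases h1 : s = i <;> by_cases h2 : s = j <;> simp_all)]
          simp [hij]
      rw [hsum]
      ext i j
      simp only [Matrix.diagonal_transpose, Matrix.diagonal_mul_diagonal,
        Matrix.add_apply, Matrix.diagonal_apply, Matrix.zero_apply]
      by_cases hij : i = j
      · subst hij; by_cases hi : i ∈ S <;> simp [hi] <;> norm_num
      · simp [hij]
  · have key : ∀ S : Finset (Fin 3),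
        spectrum ℝ (Matrix.diagonal (fun i => if i ∈ S then (1/2 : ℝ) else 0)) =
        Set.range (fun i : Fin 3 => if i ∈ S then (1/2 : ℝ) else 0) :=
      fun S => _root_.spectrum_diagonal _
    simp only [key]
    have r1 : Set.range (fun i : Fin 3 => if i ∈ ({1,2} : Finset (Fin 3)) then (1/2:ℝ) else 0)
        = {0, 1/2} := by
      ext x
      constructor
      · rintro ⟨i, rfl⟩; fin_cases i <;> simp
      · rintro (rfl | rfl)
        · exact ⟨0, by simp⟩
        · exact ⟨1, by simp⟩
    have r2 : Set.range (fun i : Fin 3 => if i ∈ ({1} : Finset (Fin 3)) then (1/2:ℝ) else 0)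
        = {0, 1/2} := by
      ext x
      constructor
      · rintro ⟨i, rfl⟩; fin_cases i <;> simp
      · rintro (rfl | rfl)
        · exact ⟨0, by simp⟩
        · exact ⟨1, by simp⟩
    have r3 : Set.range (fun i : Fin 3 => if i ∈ ({0,1,2} : Finset (Fin 3)) then (1/2:ℝ) else 0)
        = {1/2} := by
      ext x
      constructor
      · rintro ⟨i, rfl⟩; fin_cases i <;> simp
      · rintro rfl; exact ⟨0, by simp⟩
    have r4 : Set.range (fun i : Fin 3 => if i ∈ ({0,1} : Finset (Fin 3)) then (1/2:ℝ) else 0)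
        = {0, 1/2} := by
      ext x
      constructor
      · rintro ⟨i, rfl⟩; fin_cases i <;> simp
      · rintro (rfl | rfl)
        · exact ⟨2, by simp⟩
        · exact ⟨0, by simp⟩
    rw [r1, r2, r3, r4, csInf_singleton, csInf_pair]
    norm_num
end

section
/- If A is a Hurwitz (stable) real n×n matrix, then for any n×m matrix B the Lyapunov equation A W + W Aᵀ + B Bᵀ = 0 has a unique solution W, and this solution is symmetric positive semidefinite, given by W = ∫₀^∞ e^{Aτ} B Bᵀ e^{Aᵀτ} dτ. -/
/-!
Write `L X = A X + X Aᵀ` and `Φ_t X = e^{tA} X e^{tAᵀ}`, so that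
`d/dt Φ_t X = L (Φ_t X) = Φ_t (L X)`. For Hurwitz `A` the spectrum of `e^A` lies in
`exp '' σ(A)`, inside the open unit disc, so by Gelfand's formula some power of `e^A` has norm
`< 1` and `e^{tA}` decays exponentially. Then `Φ_t X → 0` integrably and
`∫₀^∞ L (Φ_t X) dt = -X` for every `X`; since `L` commutes with the integral and with `Φ_t`,
`X ↦ -∫₀^∞ Φ_t X dt` is a two-sided inverse of `L`. Hence `G = ∫₀^∞ Φ_t (B Bᵀ) dt` is the unique
solution of `L W = -B Bᵀ`, and it is positive semidefinite as an integral of the matrices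
`(e^{tA} B) (e^{tA} B)ᵀ`.
-/

open scoped Matrix
open NormedSpace Polynomial Filter Asymptotics MeasureTheory Set Topology

theorem SemiconjBy.aeval_right {R A : Type*} [CommSemiring R] [Semiring A] [Algebra R A]
    {x a b : A} (h : SemiconjBy x a b) (p : R[X]) : SemiconjBy x (aeval a p) (aeval b p) := by
  induction p using Polynomial.induction_on' with
  | add p q hp hq => simpa only [map_add] using hp.add_right hq
  | monomial n c =>
    simpa only [aeval_monomial] using
      SemiconjBy.mul_right (Algebra.commute_algebraMap_right c x) (h.pow_right n)

section FiniteDimensional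

variable {A : Type*} [NormedRing A] [NormedAlgebra ℂ A] [FiniteDimensional ℂ A]

theorem exists_aeval_eq_exp (a : A) : ∃ p : ℂ[X], aeval a p = exp a := by
  let _ : NormedAlgebra ℚ A := .restrictScalars ℚ ℂ A
  have hclosed : IsClosed (Algebra.adjoin ℂ {a} : Set A) :=
    (Subalgebra.toSubmodule (Algebra.adjoin ℂ {a})).closed_of_finiteDimensional
  have := exp_mem (R := ℂ) hclosed (Algebra.self_mem_adjoin_singleton ℂ a)
  rwa [Algebra.adjoin_singleton_eq_range_aeval] at this

theorem spectrum_exp_subset (a : A) : spectrum ℂ (exp a) ⊆ Complex.exp '' spectrum ℂ a := by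
  have := FiniteDimensional.complete ℂ A
  let _ : NormedAlgebra ℚ A := .restrictScalars ℚ ℂ A
  have := IsArtinianRing.of_finite ℂ A
  rcases subsingleton_or_nontrivial A with _ | _
  · simp [spectrum.of_subsingleton]
  obtain ⟨p, hp⟩ := exists_aeval_eq_exp a
  rintro _ hμ
  rw [← hp, spectrum.map_polynomial_aeval_of_nonempty a p (spectrum.nonempty a)] at hμ
  obtain ⟨z, hz, rfl⟩ := hμ
  refine ⟨z, hz, ?_⟩
  -- A left annihilator `x` of `z - a` intertwines `a` with `z`, hence `p(a)` with `p(z)` and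
  -- `exp a` with `exp z`; as `p(a) = exp a`, this forces `p(z) = exp z`.
  obtain ⟨x, hx, hx0⟩ : ∃ x : A, x * (algebraMap ℂ A z - a) = 0 ∧ x ≠ 0 := by
    rw [spectrum.mem_iff, IsArtinianRing.isUnit_iff_isRightRegular,
      isRightRegular_iff_left_eq_zero_of_mul] at hz
    push Not at hz
    exact hz
  have hsc : SemiconjBy x a (algebraMap ℂ A z) := by
    rw [mul_sub, sub_eq_zero] at hx
    exact hx.symm.trans (Algebra.commutes z x).symm
  have hexp := hsc.exp_right
  have haeval := hsc.aeval_right p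
  rw [← algebraMap_exp_comm, ← hp] at hexp
  rw [aeval_algebraMap_apply, coe_aeval_eq_eval] at haeval
  have h := hexp.eq.symm.trans haeval.eq
  rw [← Algebra.smul_def, ← Algebra.smul_def] at h
  rw [Complex.exp_eq_exp_ℂ]
  exact smul_left_injective ℂ hx0 h

theorem spectralRadius_exp_lt_one {a : A} (ha : ∀ z ∈ spectrum ℂ a, z.re < 0) :
    spectralRadius ℂ (exp a) < 1 := by
  have := FiniteDimensional.complete ℂ A
  rcases subsingleton_or_nontrivial A with _ | _
  · simp [spectralRadius, spectrum.of_subsingleton]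
  refine ENNReal.coe_one ▸ spectrum.spectralRadius_lt_of_forall_lt_of_nonempty
    (spectrum.nonempty _) fun _ hμ => ?_
  obtain ⟨z, hz, rfl⟩ := spectrum_exp_subset a hμ
  rw [← NNReal.coe_lt_coe, coe_nnnorm, Complex.norm_exp, NNReal.coe_one]
  exact Real.exp_lt_one_iff.2 (ha z hz)

end FiniteDimensional

theorem exists_norm_pow_lt_one_of_spectralRadius_lt_one {A : Type*} [NormedRing A]
    [NormedAlgebra ℂ A] [CompleteSpace A] {a : A} (h : spectralRadius ℂ a < 1) :
    ∃ k : ℕ, 0 < k ∧ ‖a ^ k‖ < 1 := by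
  obtain ⟨k, hk, hk0⟩ := ((spectrum.pow_nnnorm_pow_one_div_tendsto_nhds_spectralRadius a
    ).eventually_lt_const h |>.and (eventually_gt_atTop 0)).exists
  refine ⟨k, hk0, not_le.1 fun h1 => hk.not_ge (ENNReal.one_le_rpow ?_ (by positivity))⟩
  exact_mod_cast h1

section RealBanachAlgebra

variable {𝔸 : Type*} [NormedRing 𝔸] [NormedAlgebra ℝ 𝔸] [CompleteSpace 𝔸]

theorem exp_add_nat_mul_smul (a : 𝔸) (s T : ℝ) (q : ℕ) :
    exp ((s + q * T) • a) = exp (s • a) * exp (T • a) ^ q := by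
  let _ : NormedAlgebra ℚ 𝔸 := .restrictScalars ℚ ℝ 𝔸
  rw [add_smul, exp_add_of_commute (((Commute.refl a).smul_left s).smul_right _), mul_smul,
    Nat.cast_smul_eq_nsmul, exp_nsmul]

theorem exists_isBigO_exp_smul_of_norm_exp_smul_lt_one (a : 𝔸) {T : ℝ} (hT : 0 < T)
    (h : ‖exp (T • a)‖ < 1) :
    ∃ ε > 0, (fun t : ℝ => exp (t • a)) =O[atTop] fun t => Real.exp (-ε * t) := by
  let _ : NormedAlgebra ℚ 𝔸 := .restrictScalars ℚ ℝ 𝔸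
  -- Writing `t = s + q T` with `s ∈ [0, T]` gives `‖e^{ta}‖ ≤ C r^q = C e^{-ε q T}`; `r` is kept
  -- positive so that `ε = -log r / T` is a genuine rate, and `t ≥ T` makes `q ≥ 1`, so that
  -- `‖x ^ q‖ ≤ ‖x‖ ^ q` holds without `‖1‖ ≤ 1`.
  set r := max ‖exp (T • a)‖ (1 / 2)
  have hr0 : 0 < r := lt_max_of_lt_right (by norm_num)
  set ε := -Real.log r / T
  have hε : 0 < ε := div_pos (neg_pos.2 (Real.log_neg hr0 (max_lt h (by norm_num)))) hT
  obtain ⟨C, hC⟩ := (isCompact_Icc (a := 0) (b := T)).exists_bound_of_continuousOn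
    (f := fun s : ℝ => exp (s • a)) (by fun_prop)
  refine ⟨ε, hε, .of_bound (C * Real.exp (ε * T)) ?_⟩
  filter_upwards [eventually_ge_atTop T] with t ht
  set q := ⌊t / T⌋₊
  have hq0 : 0 < q := Nat.floor_pos.2 ((one_le_div hT).2 ht)
  have hqT : q * T ≤ t := (le_div_iff₀ hT).1 (Nat.floor_le (div_nonneg (hT.le.trans ht) hT.le))
  have hqT' : t < q * T + T := by
    have := Nat.lt_floor_add_one (t / T)
    rw [div_lt_iff₀ hT] at this
    linarith
  have hs : t - q * T ∈ Set.Icc 0 T := ⟨by linarith, by linarith⟩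
  calc ‖exp (t • a)‖ = ‖exp ((t - q * T) • a) * exp (T • a) ^ q‖ := by
        rw [← exp_add_nat_mul_smul, sub_add_cancel]
    _ ≤ C * r ^ q := by
        refine (norm_mul_le _ _).trans (mul_le_mul (hC _ hs) ?_ (norm_nonneg _)
          ((norm_nonneg _).trans (hC _ hs)))
        exact (norm_pow_le' _ hq0).trans (pow_le_pow_left₀ (norm_nonneg _) (le_max_left _ _) q)
    _ = C * Real.exp (-ε * (q * T)) := by
        rw [← Real.exp_log hr0, ← Real.exp_nat_mul, show -ε * (q * T) = q * -(ε * T) by ring,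
          div_mul_cancel₀ _ hT.ne', neg_neg]
    _ ≤ C * Real.exp (ε * T) * ‖Real.exp (-ε * t)‖ := by
        rw [Real.norm_of_nonneg (Real.exp_pos _).le, mul_assoc, ← Real.exp_add]
        gcongr
        · exact (norm_nonneg _).trans (hC _ hs)
        · nlinarith

end RealBanachAlgebra

theorem exists_isBigO_exp_smul_of_forall_re_lt_zero {A : Type*} [NormedRing A] [NormedAlgebra ℂ A]
    [FiniteDimensional ℂ A] {a : A} (ha : ∀ z ∈ spectrum ℂ a, z.re < 0) :
    ∃ ε > 0, (fun t : ℝ => exp (t • a)) =O[atTop] fun t => Real.exp (-ε * t) := by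
  have := FiniteDimensional.complete ℂ A
  let _ : NormedAlgebra ℚ A := .restrictScalars ℚ ℂ A
  obtain ⟨k, hk, hlt⟩ :=
    exists_norm_pow_lt_one_of_spectralRadius_lt_one (spectralRadius_exp_lt_one ha)
  refine exists_isBigO_exp_smul_of_norm_exp_smul_lt_one a (Nat.cast_pos.2 hk) ?_
  rwa [Nat.cast_smul_eq_nsmul, exp_nsmul]

namespace Matrix

variable {ι : Type*} [Fintype ι] [DecidableEq ι]

noncomputable def sylvesterFlow (A F X : Matrix ι ι ℝ) (t : ℝ) : Matrix ι ι ℝ :=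
  exp (t • A) * X * exp (t • F)

noncomputable def sylvesterOp (A F : Matrix ι ι ℝ) : Matrix ι ι ℝ →L[ℝ] Matrix ι ι ℝ :=
  LinearMap.toContinuousLinearMap (LinearMap.mulLeft ℝ A + LinearMap.mulRight ℝ F)

variable {A F : Matrix ι ι ℝ}

@[simp]
theorem sylvesterOp_apply (X : Matrix ι ι ℝ) : sylvesterOp A F X = A * X + X * F := rfl

theorem sylvesterFlow_zero (X : Matrix ι ι ℝ) : sylvesterFlow A F X 0 = X := by
  simp [sylvesterFlow]

theorem sylvesterFlow_neg (X : Matrix ι ι ℝ) (t : ℝ) :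
    sylvesterFlow A F (-X) t = -sylvesterFlow A F X t := by
  simp [sylvesterFlow]

theorem sylvesterFlow_sylvesterOp (X : Matrix ι ι ℝ) (t : ℝ) :
    sylvesterFlow A F (sylvesterOp A F X) t = sylvesterOp A F (sylvesterFlow A F X t) := by
  have hA : Commute A (exp (t • A)) := ((Commute.refl A).smul_right t).exp_right
  have hF : Commute F (exp (t • F)) := ((Commute.refl F).smul_right t).exp_right
  simp only [sylvesterFlow, sylvesterOp_apply, mul_add, add_mul, ← mul_assoc, hA.eq]
  simp only [mul_assoc, hF.eq]

/- Here matrices carry the `ℓ∞` operator norm, which makes them a Banach algebra; the lemmas used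
later under the entrywise sup norm have norm-independent statements. -/
section LinftyOpNorm

attribute [local instance] Matrix.linftyOpSeminormedAddCommGroup Matrix.linftyOpNormedRing
  Matrix.linftyOpNormedAlgebra

theorem norm_apply_le_linfty_opNorm {m n α : Type*} [Fintype m] [Fintype n]
    [SeminormedAddCommGroup α] (M : Matrix m n α) (i : m) (j : n) : ‖M i j‖ ≤ ‖M‖ := by
  have : ‖M i j‖₊ ≤ ‖M‖₊ := by
    rw [linfty_opNNNorm_def]
    exact (Finset.single_le_sum (f := fun k => ‖M i k‖₊) (fun _ _ => zero_le)
      (Finset.mem_univ j)).trans (Finset.le_sup (f := fun i => ∑ k, ‖M i k‖₊) (Finset.mem_univ i))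
  exact this

theorem map_ofReal_exp (M : Matrix ι ι ℝ) : (exp M).map ((↑) : ℝ → ℂ) = exp (M.map (↑)) :=
  map_exp Complex.ofRealHom.mapMatrix (continuous_id.matrix_map Complex.continuous_ofReal) M

theorem exists_isBigO_exp_smul_apply_of_forall_re_lt_zero {M : Matrix ι ι ℂ}
    (hM : ∀ z ∈ spectrum ℂ M, z.re < 0) :
    ∃ ε > 0, ∀ i j, (fun t : ℝ => exp (t • M) i j) =O[atTop] fun t => Real.exp (-ε * t) := by
  obtain ⟨ε, hε, h⟩ := exists_isBigO_exp_smul_of_forall_re_lt_zero hM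
  exact ⟨ε, hε, fun i j => (isBigO_of_le _ fun t => norm_apply_le_linfty_opNorm _ i j).trans h⟩

theorem hasDerivAt_sylvesterFlow (X : Matrix ι ι ℝ) (t : ℝ) :
    HasDerivAt (sylvesterFlow A F X) (sylvesterOp A F (sylvesterFlow A F X t)) t := by
  have h := ((hasDerivAt_exp_smul_const' A t).mul_const X).mul (hasDerivAt_exp_smul_const F t)
  refine h.congr_deriv ?_
  simp only [sylvesterOp_apply, sylvesterFlow, mul_assoc]
  abel

end LinftyOpNorm

end Matrix

attribute [local instance] Matrix.normedAddCommGroup Matrix.normedSpace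

/-- Instance search does not identify the topology of `Matrix.normedAddCommGroup` with the product
topology of matrices, so the `ContinuousENorm` behind integrability is supplied by hand. -/
noncomputable abbrev Matrix.continuousENorm {m n α : Type*} [Fintype m] [Fintype n]
    [NormedAddCommGroup α] : ContinuousENorm (Matrix m n α) :=
  SeminormedAddGroup.toContinuousENorm

attribute [local instance] Matrix.continuousENorm

theorem Matrix.isBigO_iff_apply {α m n 𝕜 F : Type*} [Fintype m] [Fintype n]
    [NormedAddCommGroup 𝕜] [SeminormedAddCommGroup F] {L : Filter α} {f : α → Matrix m n 𝕜}
    {g : α → F} : f =O[L] g ↔ ∀ i j, (fun x => f x i j) =O[L] g :=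
  (isBigO_pi (E' := fun _ : m => n → 𝕜)).trans
    (forall_congr' fun _ => isBigO_pi (E' := fun _ : n => 𝕜))

theorem Asymptotics.IsBigO.matrix_mul {α l m n 𝕜 : Type*} [Fintype l] [Fintype m] [Fintype n]
    [NormedRing 𝕜] {L : Filter α} {f : α → Matrix l m 𝕜} {g : α → Matrix m n 𝕜} {u v : α → ℝ}
    (hf : f =O[L] u) (hg : g =O[L] v) : (fun x => f x * g x) =O[L] fun x => u x * v x := by
  refine Matrix.isBigO_iff_apply.2 fun i j => ?_
  simpa only [Matrix.mul_apply, Finset.sum_fn] using IsBigO.sum (s := Finset.univ) fun k _ =>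
    (Matrix.isBigO_iff_apply.1 hf i k).mul (Matrix.isBigO_iff_apply.1 hg k j)

theorem Matrix.posSemidef_integral {α ι : Type*} [Fintype ι] [MeasurableSpace α] {μ : Measure α}
    {f : α → Matrix ι ι ℝ} (hf : ∀ x, (f x).PosSemidef) : (∫ x, f x ∂μ).PosSemidef := by
  classical
  by_cases hint : Integrable f μ
  swap
  · rw [integral_undef hint]
    exact PosSemidef.zero
  refine .of_dotProduct_mulVec_nonneg ?_ fun v => ?_
  · let T := (transposeLinearEquiv ι ι ℝ ℝ).toContinuousLinearEquiv
    rw [IsHermitian, conjTranspose_eq_transpose_of_trivial]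
    calc (∫ x, f x ∂μ)ᵀ = ∫ x, (f x)ᵀ ∂μ := (T.integral_comp_comm f).symm
      _ = ∫ x, f x ∂μ := by
        congr with x : 1
        simpa only [IsHermitian, conjTranspose_eq_transpose_of_trivial] using (hf x).isHermitian
  · let q : Matrix ι ι ℝ →L[ℝ] ℝ := LinearMap.toContinuousLinearMap
      (LinearMap.applyₗ v ∘ₗ LinearMap.applyₗ (star v) ∘ₗ (toLinearMap₂' ℝ).toLinearMap)
    have hq (M : Matrix ι ι ℝ) : q M = star v ⬝ᵥ M *ᵥ v := toLinearMap₂'_apply' M (star v) v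
    calc 0 ≤ ∫ x, q (f x) ∂μ := integral_nonneg fun x => (hq (f x)).symm ▸
          (hf x).dotProduct_mulVec_nonneg v
      _ = q (∫ x, f x ∂μ) := q.integral_comp_comm hint
      _ = star v ⬝ᵥ (∫ x, f x ∂μ) *ᵥ v := hq _

namespace Matrix

variable {ι : Type*} [Fintype ι] [DecidableEq ι]

def IsExponentiallyStable (A : Matrix ι ι ℝ) : Prop :=
  ∃ ε > 0, (fun t : ℝ => exp (t • A)) =O[atTop] fun t => Real.exp (-ε * t)

theorem isExponentiallyStable_of_forall_re_lt_zero {A : Matrix ι ι ℝ}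
    (hA : ∀ z ∈ spectrum ℂ (A.map ((↑) : ℝ → ℂ)), z.re < 0) : IsExponentiallyStable A := by
  obtain ⟨ε, hε, h⟩ := exists_isBigO_exp_smul_apply_of_forall_re_lt_zero hA
  refine ⟨ε, hε, isBigO_iff_apply.2 fun i j => (isBigO_of_le _ fun t => ?_).trans (h i j)⟩
  rw [← Matrix.map_smul _ t (fun x => (Complex.ofReal_mul t x).trans Complex.real_smul.symm),
    ← map_ofReal_exp, map_apply, Complex.norm_real]

theorem IsExponentiallyStable.transpose {A : Matrix ι ι ℝ} (hA : IsExponentiallyStable A) :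
    IsExponentiallyStable Aᵀ := by
  obtain ⟨ε, hε, h⟩ := hA
  refine ⟨ε, hε, (isBigO_of_le _ fun t => ?_).trans h⟩
  rw [← transpose_smul, exp_transpose, norm_transpose]

variable {A F : Matrix ι ι ℝ}

theorem PosSemidef.sylvesterFlow_transpose {X : Matrix ι ι ℝ} (hX : X.PosSemidef) (t : ℝ) :
    (sylvesterFlow A Aᵀ X t).PosSemidef := by
  simpa only [sylvesterFlow, ← transpose_smul, exp_transpose, conjTranspose_eq_transpose_of_trivial]
    using hX.mul_mul_conjTranspose_same (exp (t • A))

theorem exists_isBigO_sylvesterFlow (hA : IsExponentiallyStable A)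
    (hF : IsExponentiallyStable F) (X : Matrix ι ι ℝ) :
    ∃ ε > 0, sylvesterFlow A F X =O[atTop] fun t => Real.exp (-ε * t) := by
  obtain ⟨a, ha, hA⟩ := hA
  obtain ⟨b, hb, hF⟩ := hF
  refine ⟨a + b, add_pos ha hb, ?_⟩
  refine ((hA.matrix_mul (isBigO_const_const X one_ne_zero atTop)).matrix_mul hF).congr_right
    fun t => ?_
  rw [mul_one, ← Real.exp_add]
  ring_nf

theorem integrableOn_sylvesterFlow (hA : IsExponentiallyStable A) (hF : IsExponentiallyStable F)
    (X : Matrix ι ι ℝ) : IntegrableOn (sylvesterFlow A F X) (Ioi 0) := by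
  obtain ⟨ε, hε, h⟩ := exists_isBigO_sylvesterFlow hA hF X
  have hcont : Continuous (sylvesterFlow A F X) :=
    continuous_iff_continuousAt.2 fun t => (hasDerivAt_sylvesterFlow X t).continuousAt
  refine ((hcont.continuousOn.locallyIntegrableOn measurableSet_Ici).integrableOn_of_isBigO_atTop
    h ?_).mono_set (Ioi_subset_Ici_self (a := 0))
  exact ⟨Ioi 0, Ioi_mem_atTop 0, exp_neg_integrableOn_Ioi 0 hε⟩

theorem tendsto_sylvesterFlow_atTop (hA : IsExponentiallyStable A) (hF : IsExponentiallyStable F)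
    (X : Matrix ι ι ℝ) : Tendsto (sylvesterFlow A F X) atTop (𝓝 0) := by
  obtain ⟨ε, hε, h⟩ := exists_isBigO_sylvesterFlow hA hF X
  exact h.trans_tendsto
    (Real.tendsto_exp_atBot.comp (tendsto_id.const_mul_atTop_of_neg (neg_lt_zero.2 hε)))

theorem integral_sylvesterOp_sylvesterFlow (hA : IsExponentiallyStable A)
    (hF : IsExponentiallyStable F) (X : Matrix ι ι ℝ) :
    ∫ t in Ioi 0, sylvesterOp A F (sylvesterFlow A F X t) = -X := by
  rw [integral_Ioi_of_hasDerivAt_of_tendsto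
    (hasDerivAt_sylvesterFlow X 0).continuousAt.continuousWithinAt
    (fun t _ => hasDerivAt_sylvesterFlow X t)
    ((sylvesterOp A F).integrable_comp (integrableOn_sylvesterFlow hA hF X))
    (tendsto_sylvesterFlow_atTop hA hF X), sylvesterFlow_zero, zero_sub]

theorem sylvesterOp_integral_sylvesterFlow (hA : IsExponentiallyStable A)
    (hF : IsExponentiallyStable F) (K : Matrix ι ι ℝ) :
    sylvesterOp A F (∫ t in Ioi 0, sylvesterFlow A F K t) = -K := ((sylvesterOp A F).integral_comp_comm (integrableOn_sylvesterFlow hA hF K)).symm.trans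
    (integral_sylvesterOp_sylvesterFlow hA hF K)

theorem eq_integral_sylvesterFlow_of_sylvesterOp_eq (hA : IsExponentiallyStable A)
    (hF : IsExponentiallyStable F) {K W : Matrix ι ι ℝ} (hW : sylvesterOp A F W = -K) :
    W = ∫ t in Ioi 0, sylvesterFlow A F K t := by
  calc W = -∫ t in Ioi 0, sylvesterOp A F (sylvesterFlow A F W t) := by
        rw [integral_sylvesterOp_sylvesterFlow hA hF, neg_neg]
    _ = -∫ t in Ioi 0, sylvesterFlow A F (-K) t := by
        simp only [← sylvesterFlow_sylvesterOp, hW]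
    _ = ∫ t in Ioi 0, sylvesterFlow A F K t := by
        simp only [sylvesterFlow_neg, integral_neg, neg_neg]

end Matrix

open Matrix in
/-- If `A` is Hurwitz, then for any `B` the Lyapunov equation
`A W + W Aᵀ + B Bᵀ = 0` has the symmetric positive semidefinite matrix
`W = ∫₀^∞ e^{Aτ} B Bᵀ e^{Aᵀτ} dτ` as its unique solution. -/
theorem lyapunov_unique_posSemidef_solution {n m : ℕ}
    (A : Matrix (Fin n) (Fin n) ℝ)
    (hA : ∀ z ∈ spectrum ℂ (A.map fun x : ℝ => (x : ℂ)), z.re < 0)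
    (B : Matrix (Fin n) (Fin m) ℝ) :
    let G : Matrix (Fin n) (Fin n) ℝ :=
      ∫ τ in Set.Ioi (0 : ℝ),
        NormedSpace.exp (τ • A) * (B * Bᵀ) * NormedSpace.exp (τ • Aᵀ)
    A * G + G * Aᵀ + B * Bᵀ = 0 ∧ G.PosSemidef ∧
      ∀ W : Matrix (Fin n) (Fin n) ℝ, A * W + W * Aᵀ + B * Bᵀ = 0 → W = G := by
  intro G
  have hG : G = ∫ t in Ioi 0, sylvesterFlow A Aᵀ (B * Bᵀ) t := rfl
  have hA' := isExponentiallyStable_of_forall_re_lt_zero hA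
  refine ⟨?_, ?_, fun W hW => ?_⟩
  · rw [hG, ← sylvesterOp_apply, sylvesterOp_integral_sylvesterFlow hA' hA'.transpose,
      neg_add_cancel]
  · have hK : (B * Bᵀ).PosSemidef := by
      simpa only [conjTranspose_eq_transpose_of_trivial] using posSemidef_self_mul_conjTranspose B
    exact posSemidef_integral fun t => hK.sylvesterFlow_transpose t
  · exact eq_integral_sylvesterFlow_of_sylvesterOp_eq hA' hA'.transpose
      (eq_neg_of_add_eq_zero_left hW)
end

section
/- The greedy algorithm guarantee: for a monotone nondecreasing, submodular set function f: 2^V → ℝ with f(∅) = 0, the set S_k produced by k steps of the greedy algorithm (at each step adding an element with maximal marginal gain) satisfies f(S_k) ≥ (1 − ((k−1)/k)^k) · max_{|S|≤k} f(S) ≥ (1 − 1/e) · max_{|S|≤k} f(S). -/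
open Finset

lemma expand_lemma {V : Type*} [DecidableEq V] (f : Finset V → ℝ)
    (hsub : ∀ A B : Finset V, A ⊆ B → ∀ a ∉ B,
        f (insert a B) - f B ≤ f (insert a A) - f A) :
    ∀ (T A : Finset V), f (A ∪ T) ≤ f A + ∑ a ∈ T \ A, (f (insert a A) - f A) := by
  intro T
  induction T using Finset.induction_on with
  | empty => intro A; simp
  | @insert a T h ih =>
    intro A
    by_cases ha : a ∈ A
    · have h1 : A ∪ insert a T = A ∪ T := by
        rw [Finset.union_insert, Finset.insert_eq_self.mpr (Finset.mem_union_left _ ha)]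
      have h2 : (insert a T) \ A = T \ A := Finset.insert_sdiff_of_mem _ ha
      rw [h1, h2]; exact ih A
    · have haT : a ∉ A ∪ T := by simp [ha, h]
      have h1 : f (insert a (A ∪ T)) - f (A ∪ T) ≤ f (insert a A) - f A :=
        hsub A (A ∪ T) Finset.subset_union_left a haT
      have h2 : (insert a T) \ A = insert a (T \ A) :=
        Finset.insert_sdiff_of_notMem _ ha
      rw [Finset.union_insert, h2, Finset.sum_insert (by simp [h])]
      have := ih A
      linarith

/-- Greedy guarantee for maximizing a monotone, normalized, submodular set function
under a cardinality constraint: after `k` greedy steps,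
`f (S k) ≥ (1 − ((k−1)/k)^k) · OPT ≥ (1 − 1/e) · OPT`,
where `OPT = max_{|T| ≤ k} f T`. -/
theorem greedy_submodular_guarantee {V : Type*} [Fintype V] [DecidableEq V]
    (f : Finset V → ℝ)
    (hmono : ∀ A B : Finset V, A ⊆ B → f A ≤ f B)
    (hsub : ∀ A B : Finset V, A ⊆ B → ∀ a ∉ B,
        f (insert a B) - f B ≤ f (insert a A) - f A)
    (hempty : f ∅ = 0)
    (k : ℕ) (S : ℕ → Finset V)
    (hS0 : S 0 = ∅)
    (hgreedy : ∀ i < k, ∃ a ∉ S i, S (i + 1) = insert a (S i) ∧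
        ∀ b : V, f (insert b (S i)) - f (S i) ≤ f (insert a (S i)) - f (S i)) :
    (1 - (((k : ℝ) - 1) / k) ^ k) *
        (⨆ T : {T : Finset V // T.card ≤ k}, f T.1) ≤ f (S k) ∧
    (1 - 1 / Real.exp 1) *
        (⨆ T : {T : Finset V // T.card ≤ k}, f T.1) ≤ f (S k) := by
  have hne : Nonempty {T : Finset V // T.card ≤ k} := ⟨⟨∅, by simp⟩⟩
  set OPT := ⨆ T : {T : Finset V // T.card ≤ k}, f T.1 with hOPT
  have hbdd : BddAbove (Set.range fun T : {T : Finset V // T.card ≤ k} => f T.1) :=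
    Set.Finite.bddAbove (Set.finite_range _)
  have hOPT0 : 0 ≤ OPT := by
    have := le_ciSup hbdd (⟨∅, by simp⟩ : {T : Finset V // T.card ≤ k})
    simpa [hempty] using this
  rcases Nat.eq_zero_or_pos k with hk | hk
  · subst hk
    have hOPTle : OPT ≤ 0 := ciSup_le (fun T => by
      have hT : T.1 = ∅ := Finset.card_eq_zero.mp (Nat.le_zero.mp T.2)
      simp [hT, hempty])
    have hO : OPT = 0 := le_antisymm hOPTle hOPT0
    rw [hO]
    constructor <;> · rw [hS0, hempty]; ring_nf; simp
  · have kpos : (0:ℝ) < k := by exact_mod_cast hk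
    have hk1 : (1:ℝ) ≤ k := by exact_mod_cast hk
    have hkne : (k:ℝ) ≠ 0 := ne_of_gt kpos
    have hfac0 : (0:ℝ) ≤ 1 - 1/(k:ℝ) := by
      have : 1/(k:ℝ) ≤ 1 := by
        rw [div_le_one kpos]; exact hk1
      linarith
    -- per step contraction
    have hstep : ∀ i < k, OPT - f (S (i+1)) ≤ (1 - 1/(k:ℝ)) * (OPT - f (S i)) := by
      intro i hi
      obtain ⟨a, haS, hSi, hmax⟩ := hgreedy i hi
      set g := f (S (i+1)) - f (S i) with hg
      have hg0 : 0 ≤ g := by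
        have := hmono (S i) (S (i+1)) (by rw [hSi]; exact Finset.subset_insert _ _)
        linarith
      have hkey : OPT ≤ f (S i) + k * g := by
        apply ciSup_le
        intro T
        have h1 : f T.1 ≤ f (S i ∪ T.1) := hmono _ _ Finset.subset_union_right
        have h2 := expand_lemma f hsub T.1 (S i)
        have h3 : ∑ b ∈ T.1 \ S i, (f (insert b (S i)) - f (S i))
            ≤ ∑ _b ∈ T.1 \ S i, g := by
          apply Finset.sum_le_sum
          intro b _
          have := hmax b
          rw [hg, hSi]
          linarith
        have h4 : ∑ _b ∈ T.1 \ S i, g = ((T.1 \ S i).card : ℝ) * g := by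
          simp [Finset.sum_const, nsmul_eq_mul]
        have h5 : ((T.1 \ S i).card : ℝ) * g ≤ (k:ℝ) * g := by
          apply mul_le_mul_of_nonneg_right _ hg0
          have : (T.1 \ S i).card ≤ k :=
            le_trans (Finset.card_le_card (Finset.sdiff_subset)) T.2
          exact_mod_cast this
        rw [h4] at h3
        linarith
      have h5 : (OPT - f (S i)) / k ≤ g := by
        rw [div_le_iff₀ kpos]; linarith [hkey]
      have heq : (1 - 1/(k:ℝ)) * (OPT - f (S i))
          = (OPT - f (S i)) - (OPT - f (S i)) / k := by
        field_simp
      rw [heq]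
      have : g = f (S (i+1)) - f (S i) := hg
      linarith
    -- induction
    have hind : ∀ i, i ≤ k → OPT - f (S i) ≤ (1 - 1/(k:ℝ))^i * OPT := by
      intro i
      induction i with
      | zero => intro _; simp [hS0, hempty]
      | succ n ih =>
        intro hn
        have hn' : n < k := hn
        have h1 := hstep n hn'
        have h2 := ih (le_of_lt hn')
        calc OPT - f (S (n+1)) ≤ (1 - 1/(k:ℝ)) * (OPT - f (S n)) := h1
          _ ≤ (1 - 1/(k:ℝ)) * ((1 - 1/(k:ℝ))^n * OPT) :=
              mul_le_mul_of_nonneg_left h2 hfac0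
          _ = (1 - 1/(k:ℝ))^(n+1) * OPT := by ring
    have hfin := hind k le_rfl
    have hratio : ((k:ℝ) - 1) / k = 1 - 1/(k:ℝ) := by field_simp
    have first : (1 - (((k : ℝ) - 1) / k) ^ k) * OPT ≤ f (S k) := by
      rw [hratio]
      nlinarith [hfin]
    refine ⟨first, ?_⟩
    -- (1-1/k)^k ≤ 1/exp 1
    have hexp : (1 - 1/(k:ℝ))^k ≤ 1 / Real.exp 1 := by
      have h1 : 1 - 1/(k:ℝ) ≤ Real.exp (-(1/(k:ℝ))) := by
        have := Real.add_one_le_exp (-(1/(k:ℝ)))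
        linarith
      have h2 : (1 - 1/(k:ℝ))^k ≤ (Real.exp (-(1/(k:ℝ))))^k :=
        pow_le_pow_left₀ hfac0 h1 k
      have h3 : (Real.exp (-(1/(k:ℝ))))^k = Real.exp ((k:ℝ) * (-(1/(k:ℝ)))) := by
        rw [← Real.exp_nat_mul]
      have h4 : (k:ℝ) * (-(1/(k:ℝ))) = -1 := by field_simp
      rw [h3, h4, Real.exp_neg] at h2
      simpa [one_div] using h2
    have : (1 - 1 / Real.exp 1) * OPT ≤ (1 - (((k : ℝ) - 1) / k) ^ k) * OPT := by
      apply mul_le_mul_of_nonneg_right _ hOPT0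
      rw [hratio]; linarith
    linarith
end
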